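/- Let A ∈ ℝ^{N×M}, b ∈ ℝ^N, and let Γ̂ be a (1+M)×(1+M) symmetric PSD matrix with Γ̂_{1,1} = 1 and rank(Γ̂) = 1. Let u = Γ̂_{2:(1+M),1} and Γ = Γ̂_{2:(1+M),2:(1+M)}. If A u − b ≥ 0 entrywise, then every entry of Ω(Γ, u) := A Γ Aᵀ − A u bᵀ − b uᵀ Aᵀ + b bᵀ is nonnegative. -/
import Mathlib

lemma rank_one_factor {n : ℕ} (Γhat : Matrix (Fin (n+1)) (Fin (n+1)) ℝ)
    (hsymm : ∀ i j, Γhat i j = Γhat j i) (h11 : Γhat 0 0 = 1) (hrank : Γhat.rank = 1) :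
    ∀ i j, Γhat i j = Γhat i 0 * Γhat j 0 := by
  have hcol : ∀ j, (fun i => Γhat i j) ∈ LinearMap.range Γhat.mulVecLin := by
    intro j
    exact ⟨Pi.single j 1, by ext i; simp [Matrix.mulVecLin_apply, Matrix.mulVec_single]⟩
  have hc0ne : (fun i => Γhat i 0) ≠ 0 := by
    intro h
    have := congrFun h 0
    simp [h11] at this
  have hspan : Submodule.span ℝ {(fun i => Γhat i 0)} ≤ LinearMap.range Γhat.mulVecLin :=
    Submodule.span_le.2 (by simpa using hcol 0)
  have hfr : Module.finrank ℝ (Submodule.span ℝ {(fun i => Γhat i 0)}) =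
      Module.finrank ℝ (LinearMap.range Γhat.mulVecLin) := by
    rw [finrank_span_singleton hc0ne]
    exact hrank.symm
  have heq := Submodule.eq_of_le_of_finrank_eq hspan hfr
  intro i j
  have hj : (fun i => Γhat i j) ∈ Submodule.span ℝ {(fun i => Γhat i 0)} := by
    rw [heq]; exact hcol j
  obtain ⟨c, hc⟩ := Submodule.mem_span_singleton.1 hj
  have hc0 : c = Γhat 0 j := by
    have := congrFun hc 0
    simpa [h11] using this
  have hci := congrFun hc i
  have hsym : Γhat 0 j = Γhat j 0 := hsymm 0 j
  simp only [Pi.smul_apply, smul_eq_mul] at hci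
  rw [← hci, hc0, hsym, mul_comm]

theorem lifted_sherali_adams_nonneg {N M : ℕ}
    (A : Matrix (Fin N) (Fin M) ℝ) (b : Fin N → ℝ)
    (Γhat : Matrix (Fin (M + 1)) (Fin (M + 1)) ℝ)
    (hpsd : Γhat.PosSemidef) (h11 : Γhat 0 0 = 1) (hrank : Γhat.rank = 1)
    (u : Fin M → ℝ) (hu : u = fun i => Γhat i.succ 0)
    (Γ : Matrix (Fin M) (Fin M) ℝ) (hΓ : Γ = Γhat.submatrix Fin.succ Fin.succ)
    (hfeas : ∀ i, 0 ≤ A.mulVec u i - b i) :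
    ∀ i j, 0 ≤ (A * Γ * A.transpose
      - Matrix.vecMulVec (A.mulVec u) b
      - Matrix.vecMulVec b (A.mulVec u)
      + Matrix.vecMulVec b b) i j := by
  have hfac := rank_one_factor Γhat (fun i j => by
    have := congrFun (congrFun hpsd.isHermitian i) j
    simpa using this.symm) h11 hrank
  have hΓuu : ∀ k l, Γ k l = u k * u l := by
    intro k l
    rw [hΓ, hu]
    simpa using hfac k.succ l.succ
  intro i j
  have hmain : (A * Γ * A.transpose) i j = A.mulVec u i * A.mulVec u j := by
    simp only [Matrix.mul_apply, Matrix.transpose_apply, Matrix.mulVec,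
      dotProduct, hΓuu]
    rw [Finset.sum_mul_sum, Finset.sum_comm]
    refine Finset.sum_congr rfl fun k _ => ?_
    rw [Finset.sum_mul]
    refine Finset.sum_congr rfl fun l _ => ?_
    ring
  have : (A * Γ * A.transpose
      - Matrix.vecMulVec (A.mulVec u) b
      - Matrix.vecMulVec b (A.mulVec u)
      + Matrix.vecMulVec b b) i j
      = (A.mulVec u i - b i) * (A.mulVec u j - b j) := by
    simp only [Matrix.add_apply, Matrix.sub_apply, Matrix.vecMulVec_apply, hmain]
    ring
  rw [this]
  exact mul_nonneg (hfeas i) (hfeas j)
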